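/- arXiv:1706.08469 — 2 statements merged into one kernel-verified Lean document; each statement's English description precedes it below -/
import Mathlib

section
/- For all nonnegative integers r and n, L_{3rn} * L_{3rn+3r} = L_{rn} * L_{rn+r} * (L_{2rn+r}^2 - (-1)^{nr} * L_{rn+r}^2 - (-1)^{(n-1)r} * L_{rn}^2 + L_r^2 + (-1)^r). -/
open Finset

def L : ℕ → ℤ
  | 0 => 2
  | 1 => 1
  | n + 2 => L (n + 1) + L n

def F (n : ℕ) : ℤ := Nat.fib n

lemma F_add_two (k : ℕ) : F (k + 2) = F (k + 1) + F k := by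
  simp [F, Nat.fib_add_two]; ring

lemma L_eq : ∀ k, L k = 2 * F (k + 1) - F k
  | 0 => by simp [L, F]
  | 1 => by norm_num [L, F]
  | (k + 2) => by
      rw [show L (k + 2) = L (k + 1) + L k from rfl, L_eq (k + 1), L_eq k,
        F_add_two (k + 1), F_add_two k]
      ring

lemma fibI1 (m n : ℕ) : F (m + n + 1) = F (m + 1) * F (n + 1) + F m * F n := by
  have h := Nat.fib_add m n
  simp only [F]
  push_cast [h]
  ring

lemma fibI (m n : ℕ) : F (m + n) = F (m + 1) * F n + F m * F (n + 1) - F m * F n := by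
  cases m with
  | zero => simp [F]
  | succ k =>
      have h := fibI1 k n
      have e : k + 1 + n = k + n + 1 := by ring
      rw [e, h, F_add_two k]
      ring

lemma cassini : ∀ k : ℕ, ((-1 : ℤ)) ^ k = F (k + 1) ^ 2 - F (k + 1) * F k - F k ^ 2
  | 0 => by simp [F]
  | (k + 1) => by
      have ih := cassini k
      rw [F_add_two k, pow_succ]
      linear_combination (-1 : ℤ) * ih

theorem stmt9 (r n : ℕ) :
    L (3 * r * n) * L (3 * r * n + 3 * r) =
      L (r * n) * L (r * n + r) *
        (L (2 * r * n + r) ^ 2 - (-1 : ℤ) ^ (n * r) * L (r * n + r) ^ 2 -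
          (-1 : ℤ) ^ ((n + 1) * r) * L (r * n) ^ 2 + L r ^ 2 + (-1 : ℤ) ^ r) := by
  have e1 : 3 * r * n = r * n + r * n + r * n := by ring
  have e2 : 3 * r * n + 3 * r = (r * n + r) + (r * n + r) + (r * n + r) := by ring
  have e3 : 2 * r * n + r = r * n + (r * n + r) := by ring
  have hd : ((-1 : ℤ)) ^ (n * r) =
      F (r * n + 1) ^ 2 - F (r * n + 1) * F (r * n) - F (r * n) ^ 2 := by
    rw [Nat.mul_comm]; exact cassini (r * n)
  have he : ((-1 : ℤ)) ^ r = F (r + 1) ^ 2 - F (r + 1) * F r - F r ^ 2 := cassini r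
  have h5 : ((-1 : ℤ)) ^ ((n + 1) * r) = (-1) ^ (n * r) * (-1) ^ r := by
    rw [add_mul, one_mul, pow_add]
  have hQ : (F (r * n + 1) ^ 2 - F (r * n + 1) * F (r * n) - F (r * n) ^ 2) ^ 2 = 1 := by
    rw [← cassini (r * n), ← pow_mul, mul_comm, pow_mul]
    simp
  rw [e2, e1, e3, h5, hd, he]
  simp only [L_eq]
  rw [fibI1 (r * n + r * n) (r * n), fibI (r * n + r * n) (r * n),
    fibI1 (r * n) (r * n), fibI (r * n) (r * n),
    fibI1 ((r * n + r) + (r * n + r)) (r * n + r), fibI ((r * n + r) + (r * n + r)) (r * n + r),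
    fibI1 (r * n + r) (r * n + r), fibI (r * n + r) (r * n + r),
    fibI1 (r * n) (r * n + r), fibI (r * n) (r * n + r),
    fibI1 (r * n) r, fibI (r * n) r]
  linear_combination ((20)*F (r*n+1)*F (r*n+1)*F (r+1)*F (r+1)*F (r+1) + (-30)*F (r*n+1)*F (r*n+1)*F r*F (r+1)*F (r+1) + (10)*F (r*n+1)*F (r*n+1)*F r*F r*F (r+1) + (-20)*F (r*n)*F (r*n+1)*F (r+1)*F (r+1)*F (r+1) + (55)*F (r*n)*F (r*n+1)*F r*F (r+1)*F (r+1) + (-35)*F (r*n)*F (r*n+1)*F r*F r*F (r+1) + (5)*F (r*n)*F (r*n)*F (r+1)*F (r+1)*F (r+1) + (-20)*F (r*n)*F (r*n)*F r*F (r+1)*F (r+1) + (15)*F (r*n)*F (r*n)*F r*F r*F (r+1)) * hQ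
end

section
/- For all positive integers r and n with r odd: if n is even then L_{3r} * (∑_{k=1}^n L_{2rk}^3) = 5 * F_{rn} * F_{rn+r} * (L_{rn} * L_{rn+r} * L_{2rn+r} + 4*(L_{2r} + 1)), and if n is odd then L_{3r} * (∑_{k=1}^n L_{2rk}^3) = L_{rn} * L_{rn+r} * (5 * F_{rn} * F_{rn+r} * L_{2rn+r} + 4*(L_{2r} + 1)). -/
/-!
With `φ, ψ` the roots of `x² = x + 1`, Binet's formulas `L m = φ^m + ψ^m`, `√5 F m = φ^m - ψ^m`
and `φψ = -1` give the product rules `L m L (m+n) = L (2m+n) + (-1)^m L n` and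
`5 F m F (m+n) = L (2m+n) - (-1)^m L n`. Hence `L (2rk)^3 = L (6rk) + 3 L (2rk)`, and for odd `r`
the sums `L r ∑ L (2rk)` and `L (3r) ∑ L (6rk)` telescope. With `M = 2rn + r` this gives
`L (3r) ∑ L (2rk)^3 = L (3M) - L (3r) + 3 (L (2r) + 1) (L M - L r)`. For either parity of `n` the
two factors `5 F (rn) F (rn+r)` and `L (rn) L (rn+r)` are `L M - L r` and `L M + L r` in some
order, and both claimed right-hand sides become the same polynomial in `L M` and `L r`.
-/

open Finset

open Real

open scoped goldenRatio

lemma L_eq_goldenRatio_pow_add_goldenConj_pow (n : ℕ) : (L n : ℝ) = φ ^ n + ψ ^ n := by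
  induction n using Nat.twoStepInduction with
  | zero => norm_num [L]
  | one => simp [L, goldenRatio_add_goldenConj]
  | more n ih₀ ih₁ =>
    rw [L, Int.cast_add, ih₀, ih₁]
    linear_combination (-φ ^ n) * goldenRatio_sq - ψ ^ n * goldenConj_sq

lemma sqrt_five_mul_F (n : ℕ) : √5 * F n = φ ^ n - ψ ^ n := by
  rw [F, Int.cast_natCast, coe_fib_eq]
  field_simp

lemma goldenRatio_pow_mul_goldenConj_pow (m : ℕ) : φ ^ m * ψ ^ m = (-1) ^ m := by
  rw [← mul_pow, goldenRatio_mul_goldenConj]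

lemma L_mul_L_add (m n : ℕ) : L m * L (m + n) = L (2 * m + n) + (-1) ^ m * L n := by
  have h : (L m * L (m + n) : ℝ) = L (2 * m + n) + (-1) ^ m * L n := by
    simp only [L_eq_goldenRatio_pow_add_goldenConj_pow, pow_add, two_mul]
    linear_combination (φ ^ n + ψ ^ n) * goldenRatio_pow_mul_goldenConj_pow m
  exact_mod_cast h

lemma five_mul_F_mul_F_add (m n : ℕ) :
    5 * F m * F (m + n) = L (2 * m + n) - (-1) ^ m * L n := by
  have h : (5 * F m * F (m + n) : ℝ) = L (2 * m + n) - (-1) ^ m * L n := by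
    calc (5 * F m * F (m + n) : ℝ) = (√5 * F m) * (√5 * F (m + n)) := by
          rw [mul_mul_mul_comm, mul_self_sqrt (by norm_num), mul_assoc]
      _ = L (2 * m + n) - (-1) ^ m * L n := by
          rw [sqrt_five_mul_F, sqrt_five_mul_F]
          simp only [L_eq_goldenRatio_pow_add_goldenConj_pow, pow_add, two_mul]
          linear_combination (-(φ ^ n + ψ ^ n)) * goldenRatio_pow_mul_goldenConj_pow m
  exact_mod_cast h

lemma L_sq (m : ℕ) : L m ^ 2 = L (2 * m) + 2 * (-1) ^ m := by
  have h := L_mul_L_add m 0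
  rw [L, add_zero, add_zero] at h
  linear_combination h

lemma L_pow_three (m : ℕ) : L m ^ 3 = L (3 * m) + 3 * (-1) ^ m * L m := by
  have h := L_mul_L_add m m
  rw [show 2 * m + m = 3 * m by ring, ← two_mul] at h
  linear_combination L m * L_sq m + h

lemma L_mul_sum_L_two_mul {r : ℕ} (hr : Odd r) (n : ℕ) :
    L r * ∑ k ∈ Icc 1 n, L (2 * r * k) = L (2 * r * n + r) - L r := by
  induction n with
  | zero => simp
  | succ n ih =>
    have hstep := L_mul_L_add r (2 * r * n + r)
    rw [hr.neg_one_pow, show 2 * r + (2 * r * n + r) = 2 * r * (n + 1) + r by ring,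
      show r + (2 * r * n + r) = 2 * r * (n + 1) by ring] at hstep
    rw [sum_Icc_succ_top (by omega), mul_add, ih, hstep]
    ring

lemma L_three_mul_mul_sum_L_pow_three {r : ℕ} (hr : Odd r) (n : ℕ) :
    L (3 * r) * ∑ k ∈ Icc 1 n, L (2 * r * k) ^ 3 =
      L (3 * (2 * r * n + r)) - L (3 * r) + 3 * (L (2 * r) + 1) * (L (2 * r * n + r) - L r) := by
  have hcube (k : ℕ) : L (2 * r * k) ^ 3 = L (2 * (3 * r) * k) + 3 * L (2 * r * k) := by
    rw [L_pow_three, ((even_two_mul r).mul_right k).neg_one_pow]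
    ring_nf
  have hL3r : L (3 * r) = L r * (L (2 * r) + 1) := by
    have := L_mul_L_add r r
    rw [hr.neg_one_pow, ← two_mul, show 2 * r + r = 3 * r by ring] at this
    linear_combination -this
  simp only [hcube, sum_add_distrib, ← mul_sum]
  rw [mul_add, L_mul_sum_L_two_mul ((by decide : Odd 3).mul hr),
    show 2 * (3 * r) * n + 3 * r = 3 * (2 * r * n + r) by ring]
  linear_combination 3 * (∑ k ∈ Icc 1 n, L (2 * r * k)) * hL3r +
    3 * (L (2 * r) + 1) * L_mul_sum_L_two_mul hr n

theorem stmt16_general (r n : ℕ) (hro : Odd r) :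
    (Even n → L (3 * r) * ∑ k ∈ Finset.Icc 1 n, L (2 * r * k) ^ 3 =
      5 * F (r * n) * F (r * n + r) * (L (r * n) * L (r * n + r) * L (2 * r * n + r) + 4 * (L (2 * r) + 1))) ∧
    (Odd n → L (3 * r) * ∑ k ∈ Finset.Icc 1 n, L (2 * r * k) ^ 3 =
      L (r * n) * L (r * n + r) * (5 * F (r * n) * F (r * n + r) * L (2 * r * n + r) + 4 * (L (2 * r) + 1))) := by
  set M := 2 * r * n + r
  have hM : Odd M := (even_two_mul r).mul_right n |>.add_odd hro
  have hL3M := L_pow_three M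
  have hL3r := L_pow_three r
  have hL2r := L_sq r
  rw [hM.neg_one_pow] at hL3M
  rw [hro.neg_one_pow] at hL3r hL2r
  have hclosed : L (3 * M) - L (3 * r) + 3 * (L (2 * r) + 1) * (L M - L r) =
      (L M - L r) * ((L M + L r) * L M + 4 * (L (2 * r) + 1)) := by
    linear_combination hL3r - hL3M + (L M - L r) * hL2r
  have hL := L_mul_L_add (r * n) r
  have hF := five_mul_F_mul_F_add (r * n) r
  rw [← mul_assoc] at hL hF
  rw [L_three_mul_mul_sum_L_pow_three hro n, hclosed]
  constructor
  · intro hn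
    rw [(hn.mul_left r).neg_one_pow] at hL hF
    rw [hL, hF]
    ring
  · intro hn
    rw [(hro.mul hn).neg_one_pow] at hL hF
    rw [hL, hF]
    ring

theorem stmt16 (r n : ℕ) (hr : 0 < r) (hn : 0 < n) (hro : Odd r) :
    (Even n → L (3 * r) * ∑ k ∈ Finset.Icc 1 n, L (2 * r * k) ^ 3 =
      5 * F (r * n) * F (r * n + r) * (L (r * n) * L (r * n + r) * L (2 * r * n + r) + 4 * (L (2 * r) + 1))) ∧
    (Odd n → L (3 * r) * ∑ k ∈ Finset.Icc 1 n, L (2 * r * k) ^ 3 =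
      L (r * n) * L (r * n + r) * (5 * F (r * n) * F (r * n + r) * L (2 * r * n + r) + 4 * (L (2 * r) + 1))) :=
  stmt16_general r n hro
end
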